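/- Let W ∈ M_3(ℂ) be the unitary matrix W = [[0,0,1],[0,−1,0],[1,0,0]]. Then for every X ∈ M_3(ℂ), Φ(X) = (1/2)·( tr(X)·I₃ − W Xᵀ W† ), where Xᵀ is the transpose of X; i.e., the j = 1 Landau–Streater channel is the Werner–Holevo channel Φ_WH(Y) = (tr(Y)·I₃ − Yᵀ)/2 concatenated with the unitary conjugation by W. -/
import Mathlib


open Matrix Complex

noncomputable section

/-- Spin-1 matrix `Jₓ = (1/√2)·[[0,1,0],[1,0,1],[0,1,0]]`. -/
def J1x : Matrix (Fin 3) (Fin 3) ℂ :=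
  ((Real.sqrt 2 : ℂ))⁻¹ • !![0, 1, 0; 1, 0, 1; 0, 1, 0]

/-- Spin-1 matrix `J_y = (1/√2)·[[0,-i,0],[i,0,-i],[0,i,0]]`. -/
def J1y : Matrix (Fin 3) (Fin 3) ℂ :=
  ((Real.sqrt 2 : ℂ))⁻¹ • !![0, -Complex.I, 0; Complex.I, 0, -Complex.I; 0, Complex.I, 0]

/-- Spin-1 matrix `J_z = diag(1,0,-1)`. -/
def J1z : Matrix (Fin 3) (Fin 3) ℂ := !![1, 0, 0; 0, 0, 0; 0, 0, -1]

/-- The spin-1 (j = 1) Landau–Streater map `Φ(X) = (JₓXJₓ + J_yXJ_y + J_zXJ_z)/2`. -/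
def LS1 (X : Matrix (Fin 3) (Fin 3) ℂ) : Matrix (Fin 3) (Fin 3) ℂ :=
  (1/2 : ℂ) • (J1x * X * J1x + J1y * X * J1y + J1z * X * J1z)

end

lemma key2 : ((Real.sqrt 2 : ℂ))⁻¹ ^ 2 = 1/2 := by
  rw [sq, ← mul_inv, ← Complex.ofReal_mul, Real.mul_self_sqrt (by norm_num)]; norm_num

set_option maxHeartbeats 2000000 in
/-- with `W = [[0,0,1],[0,-1,0],[1,0,0]]` (a unitary matrix), the j = 1
Landau–Streater channel is the Werner–Holevo channel concatenated with conjugation by `W`: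
`Φ(X) = (tr(X)·I₃ - W Xᵀ W†)/2` for every `X ∈ M₃(ℂ)`. -/
theorem landau_streater_eq_werner_holevo (W : Matrix (Fin 3) (Fin 3) ℂ)
    (hW : W = !![0, 0, 1; 0, -1, 0; 1, 0, 0]) :
    W ∈ Matrix.unitaryGroup (Fin 3) ℂ ∧
      ∀ X : Matrix (Fin 3) (Fin 3) ℂ,
        LS1 X = (1/2 : ℂ) • (X.trace • (1 : Matrix (Fin 3) (Fin 3) ℂ) - W * Xᵀ * Wᴴ) := by
  subst hW
  constructor
  · constructor <;>
    · ext i j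
      fin_cases i <;> fin_cases j <;>
        simp [Matrix.mul_apply, Fin.sum_univ_three, Matrix.one_apply, conjTranspose_apply,
          Matrix.vecHead, Matrix.vecTail]
  · intro X
    ext i j
    fin_cases i <;> fin_cases j <;>
      simp [LS1, J1x, J1y, J1z, Matrix.mul_apply, Fin.sum_univ_three, Matrix.trace,
        Matrix.diag, Matrix.one_apply, conjTranspose_apply, transpose_apply,
        Matrix.vecMul, dotProduct, Matrix.vecHead, Matrix.vecTail] <;>
      ring_nf <;>
      simp only [Complex.I_sq, key2] <;>
      ring_nf
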